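/- arXiv:1506.06424 — 2 statements merged into one kernel-verified Lean document; each statement's English description precedes it below -/
import Mathlib

section
/- Let R = k[x_1,…,x_n] be a polynomial ring over a field and let 𝔞 be a monomial ideal of finite colength. Then for every integer p ≥ 1, the colength satisfies ℓ(R/𝔞) ≥ (1/p^n)·ℓ(R/𝔞^p). -/
/-!
The quotient of `k[x]` by the monomial ideal generated by `S` has the monomials outside the
upper set `U = upperClosure S` as a `k`-basis, and `𝔞 ^ p` corresponds to the `p`-fold sumset
`p • U`. A monomial `u ∉ p • U` is determined by its coordinatewise quotient and remainder
modulo `p`; the quotient `u / p` lies outside `U` (since `p • (u / p) ≤ u`) and the remainder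
takes at most `p ^ n` values, so `(p • U)ᶜ` has at most `p ^ n` times as many elements as `Uᶜ`.
This is the lattice-point form of `Q^c(𝔞^p) ⊆ p • Q^c(𝔞)`.
-/

open MvPolynomial Module
open scoped Pointwise

lemma IsUpperSet.nsmul {M : Type*} [AddCommMonoid M] [PartialOrder M] [CanonicallyOrderedAdd M]
    {U : Set M} (hU : IsUpperSet U) {p : ℕ} (hp : p ≠ 0) : IsUpperSet (p • U) := by
  obtain ⟨q, rfl⟩ := Nat.exists_eq_succ_of_ne_zero hp
  rw [succ_nsmul]
  rintro _ y hle ⟨a, ha, b, hb, rfl⟩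
  obtain ⟨c, rfl⟩ := exists_add_of_le hle
  exact ⟨a, ha, b + c, hU le_self_add hb, (add_assoc a b c).symm⟩

lemma IsUpperSet.natCard_compl_nsmul_le {σ : Type*} [Finite σ] {U : Set (σ →₀ ℕ)}
    (hU : IsUpperSet U) (hfin : Uᶜ.Finite) {p : ℕ} (hp : 0 < p) :
    Nat.card ↥(p • U)ᶜ ≤ p ^ Nat.card σ * Nat.card ↥Uᶜ := by
  have : Finite ↥Uᶜ := hfin
  let divMod : ↥(p • U)ᶜ → ↥Uᶜ × (σ → Fin p) := fun u =>
    (⟨Finsupp.mapRange (· / p) (Nat.zero_div p) u, fun hq => u.2 <|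
        hU.nsmul hp.ne' (fun i => by simpa using Nat.mul_div_le (u.1 i) p)
          (Set.nsmul_mem_nsmul hq)⟩,
      fun i => ⟨u.1 i % p, Nat.mod_lt _ hp⟩)
  have h_inj : divMod.Injective := by
    rintro u v huv
    simp only [divMod, Prod.mk.injEq, Subtype.mk.injEq, _root_.funext_iff, Finsupp.ext_iff,
      Finsupp.mapRange_apply, Fin.ext_iff] at huv
    ext i
    rw [← Nat.div_add_mod (u.1 i) p, ← Nat.div_add_mod (v.1 i) p, huv.1 i, huv.2 i]
  calc Nat.card ↥(p • U)ᶜ ≤ Nat.card (↥Uᶜ × (σ → Fin p)) :=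
        Nat.card_le_card_of_injective divMod h_inj
    _ = p ^ Nat.card σ * Nat.card ↥Uᶜ := by
        rw [Nat.card_prod, Nat.card_fun, Nat.card_fin, mul_comm]

namespace MvPolynomial

variable {σ k : Type*}

section CommSemiring

variable [CommSemiring k]

lemma restrictScalars_span_monomial_image (S : Set (σ →₀ ℕ)) :
    (Ideal.span ((fun u => monomial u (1 : k)) '' S)).restrictScalars k =
      restrictSupport k (upperClosure S) := by
  ext f
  simp only [Submodule.restrictScalars_mem, mem_ideal_span_monomial_image,
    mem_restrictSupport_iff, Set.subset_def, SetLike.mem_coe, mem_upperClosure]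

lemma isCompl_restrictSupport_compl (s : Set (σ →₀ ℕ)) :
    IsCompl (restrictSupport k s) (restrictSupport k sᶜ) := by
  have h : IsCompl (Finsupp.supported k k s) (Finsupp.supported k k sᶜ) :=
    ⟨Finsupp.disjoint_supported_supported isCompl_compl.disjoint,
      Finsupp.codisjoint_supported_supported isCompl_compl.codisjoint⟩
  simp only [restrictSupport, AddMonoidAlgebra.supported_eq_map]
  exact (Submodule.orderIsoMapComap (AddMonoidAlgebra.coeffLinearEquiv k).symm).isCompl h

end CommSemiring

noncomputable def quotientBasisOfRestrictScalarsEq [CommRing k] {I : Ideal (MvPolynomial σ k)}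
    {s : Set (σ →₀ ℕ)} (hI : I.restrictScalars k = restrictSupport k s) :
    Basis ↥sᶜ k (MvPolynomial σ k ⧸ I) :=
  (basisRestrictSupport k sᶜ).map <|
    (Submodule.quotientEquivOfIsCompl _ _ (isCompl_restrictSupport_compl s)).symm ≪≫ₗ
      Submodule.quotEquivOfEq _ _ hI.symm ≪≫ₗ Submodule.Quotient.restrictScalarsEquiv k I

end MvPolynomial

/-- For a monomial ideal `𝔞` of finite colength in `k[x_1, …, x_n]`, the colength
(= `k`-vector space dimension of the quotient) satisfies
`ℓ(R/𝔞^p) ≤ p^n · ℓ(R/𝔞)` for every `p ≥ 1`. -/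
theorem stmt_1 {k : Type*} [Field k] {n : ℕ}
    (a : Ideal (MvPolynomial (Fin n) k))
    (hmon : ∃ S : Set (Fin n →₀ ℕ),
      a = Ideal.span ((fun u => MvPolynomial.monomial u (1 : k)) '' S))
    (hfin : Module.Finite k (MvPolynomial (Fin n) k ⧸ a))
    (p : ℕ) (hp : 1 ≤ p) :
    Module.finrank k (MvPolynomial (Fin n) k ⧸ (a ^ p)) ≤
      p ^ n * Module.finrank k (MvPolynomial (Fin n) k ⧸ a) := by
  obtain ⟨S, rfl⟩ := hmon
  have hU := restrictScalars_span_monomial_image (k := k) S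
  have hUp : (Ideal.span ((fun u => monomial u (1 : k)) '' S) ^ p).restrictScalars k =
      restrictSupport k (p • upperClosure S : Set (Fin n →₀ ℕ)) := by
    rw [Submodule.restrictScalars_pow (Nat.one_le_iff_ne_zero.mp hp), hU, restrictSupport_nsmul]
  let b := quotientBasisOfRestrictScalarsEq hU
  have hUc : (upperClosure S : Set (Fin n →₀ ℕ))ᶜ.Finite :=
    Set.finite_coe_iff.mp (Module.Finite.finite_basis b)
  rw [finrank_eq_nat_card_basis (quotientBasisOfRestrictScalarsEq hUp),
    finrank_eq_nat_card_basis b]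
  simpa using (upperClosure S).upper.natCard_compl_nsmul_le hUc hp
end

section
/- Let X be an affine variety of dimension n and C ⊆ X_∞ a subset whose image in X is a finite set of closed points. If C is thin, i.e., C ⊆ Z_∞ for a proper closed subscheme Z ⊊ X, then vol(C) = 0. -/
open ENNReal

universe u

/-- An arc of the affine variety `Spec R`: a ring homomorphism `R → K[[t]]` for some
field `K`. -/
structure Arc (R : Type u) [CommRing R] : Type (u + 1) where
  K : Type u
  [fld : Field K]
  toHom : R →+* PowerSeries K

attribute [instance] Arc.fld

/-- `ord_γ(f)`: the order of vanishing of `f` along the arc `γ`. -/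
noncomputable def arcOrd {R : Type u} [CommRing R] (γ : Arc R) (f : R) : ℕ∞ :=
  (γ.toHom f).order

/-- The length `ℓ(R/I)` of the quotient `R/I`. -/
noncomputable def idealColength (R : Type u) [CommRing R] (I : Ideal R) : ℕ∞ :=
  (Order.krullDim (Submodule R (R ⧸ I))).unbotD 0

/-- The volume of a graded sequence of ideals in an `n`-dimensional ring. -/
noncomputable def volSeq (R : Type u) [CommRing R] (n : ℕ) (a : ℕ → Ideal R) : ℝ≥0∞ :=
  Filter.atTop.limsup fun m : ℕ =>
    ENat.toENNReal (idealColength R (a m)) * (Nat.factorial n) / (m : ℝ≥0∞) ^ n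

/-!
Pick `z ≠ 0` in `I_Z` and let `J` be the intersection of the maximal ideals below `C`. Every arc
of `C` has order `≥ p` along `(z) + J^p`, so `ℓ(R/𝔟_p) ≤ ℓ(R/((z) + J^p))`, and this is
`O(p^(n-1))` because `R/(z)` has dimension at most `n - 1`.

The growth bound `ℓ(A/J^p) = O(p^d)`, for `J` of finite colength in a Noetherian ring of
dimension `≤ d`, is proved by induction on `d`. A prime filtration of `A` reduces it to the
quotients `A/P`. If `J ⊆ P` there is nothing to do; otherwise pick `z ∈ J \ P`: since
`J^p = J^p + (z^p)`, the chain `J^p + (z^j)` gives `ℓ(A/(P + J^p)) ≤ p · ℓ(A/(P + (z) + J^p))`,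
and `A/(P + (z))` has dimension `≤ d - 1` because `z` is a nonzerodivisor on the domain `A/P`.
-/

open Module Ideal

theorem Module.length_le_add_of_exact {R M N P : Type*} [Ring R] [AddCommGroup M] [Module R M]
    [AddCommGroup N] [Module R N] [AddCommGroup P] [Module R P] {f : N →ₗ[R] M} {g : M →ₗ[R] P}
    (hg : Function.Surjective g) (H : Function.Exact f g) :
    length R M ≤ length R N + length R P := by
  rw [length_eq_add_of_exact _ g (LinearMap.ker g).injective_subtype hg
    (LinearMap.exact_subtype_ker_map g), (LinearEquiv.ofEq _ _ H.linearMap_ker_eq).length_eq]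
  gcongr
  exact length_le_of_surjective f.rangeRestrict f.surjective_rangeRestrict

section Length

variable {A : Type*} [CommRing A]

theorem Ideal.length_quotient_antitone : Antitone fun I : Ideal A ↦ length A (A ⧸ I) :=
  fun _ _ h ↦ length_le_of_surjective _ (Submodule.factor_surjective h)

theorem Ideal.length_quotient_inf_le (I K : Ideal A) :
    length A (A ⧸ (I ⊓ K)) ≤ length A (A ⧸ I) + length A (A ⧸ K) := by
  rw [← length_prod]
  refine length_le_of_injective
    ((Submodule.factor inf_le_left).prod (Submodule.factor inf_le_right)) ?_
  rw [← LinearMap.ker_eq_bot, eq_bot_iff]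
  intro y hy
  obtain ⟨a, rfl⟩ := Quotient.mk_surjective y
  simp_all [Quotient.eq_zero_iff_mem]

theorem Ideal.length_quotient_finset_inf_le {s : Finset (Ideal A)} (hs : ∀ m ∈ s, m.IsMaximal) :
    length A (A ⧸ s.inf id) ≤ s.card := by
  classical
  induction s using Finset.induction_on with
  | empty => simp
  | insert m s hm ih =>
    rw [Finset.inf_insert, Finset.card_insert_of_notMem hm, Nat.cast_succ, add_comm]
    have : IsSimpleModule A (A ⧸ m) := isSimpleModule_iff_isCoatom.mpr (hs m (by simp)).out
    grw [id, length_quotient_inf_le, length_eq_one, ih fun m' hm' ↦ hs m' (by simp [hm'])]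

theorem Ideal.length_quotient_map_eq (I K : Ideal A) :
    length (A ⧸ I) ((A ⧸ I) ⧸ K.map (Quotient.mk I)) = length A (A ⧸ (I ⊔ K)) := by
  rw [← length_eq_of_surjective (S := A) Quotient.mk_surjective]
  exact (DoubleQuot.quotQuotEquivQuotSupₐ A I K).toLinearEquiv.length_eq

open TensorProduct in
theorem Ideal.length_quotient_tensor_quotient_eq (P I : Ideal A) :
    length A ((A ⧸ P) ⊗[A] (A ⧸ I)) = length A (A ⧸ (P ⊔ I)) := by
  rw [← ((Algebra.TensorProduct.quotIdealMapEquivTensorQuot (A ⧸ P) I).toLinearEquiv.restrictScalars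
    A).length_eq, ← (DoubleQuot.quotQuotEquivQuotSupₐ A P I).toLinearEquiv.length_eq]
  rfl

theorem Ideal.length_quotient_le_add_of_mul_mem {I G : Ideal A} {x : A}
    (hxG : ∀ g ∈ G, x * g ∈ I) :
    length A (A ⧸ I) ≤ length A (A ⧸ G) + length A (A ⧸ (I ⊔ span {x})) := by
  refine length_le_add_of_exact (f := G.liftQ (I.mkQ ∘ₗ LinearMap.mulLeft A x)
    fun g hg ↦ by simpa [← map_mul, Quotient.eq_zero_iff_mem] using hxG g hg)
    (Submodule.factor_surjective le_sup_left) fun y ↦ ?_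
  obtain ⟨a, rfl⟩ := Quotient.mk_surjective y
  constructor
  · intro h
    obtain ⟨i, hi, _, hc, rfl⟩ := Submodule.mem_sup.1 (Quotient.eq_zero_iff_mem.1 h)
    obtain ⟨c, rfl⟩ := mem_span_singleton'.1 hc
    refine ⟨Quotient.mk G c, ?_⟩
    change Quotient.mk I (x * c) = Quotient.mk I (i + c * x)
    rw [map_add, Quotient.eq_zero_iff_mem.2 hi, zero_add, mul_comm]
  · rintro ⟨y, hy⟩
    obtain ⟨c, rfl⟩ := Quotient.mk_surjective y
    rw [← hy]
    exact Quotient.eq_zero_iff_mem.2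
      (Submodule.mem_sup_right (mem_span_singleton'.2 ⟨c, mul_comm c x⟩))

theorem Ideal.length_quotient_sup_span_pow_le (K : Ideal A) (x : A) (j : ℕ) :
    length A (A ⧸ (K ⊔ span {x ^ j})) ≤ j * length A (A ⧸ (K ⊔ span {x})) := by
  induction j with
  | zero => simp
  | succ j ih =>
    have hxG : ∀ g ∈ K ⊔ span {x}, x ^ j * g ∈ K ⊔ span {x ^ (j + 1)} := by
      intro g hg
      obtain ⟨k, hk, _, hc, rfl⟩ := Submodule.mem_sup.1 hg
      obtain ⟨c, rfl⟩ := mem_span_singleton'.1 hc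
      rw [mul_add, show x ^ j * (c * x) = c * x ^ (j + 1) by ring]
      exact add_mem (Submodule.mem_sup_left (K.mul_mem_left _ hk))
        (Submodule.mem_sup_right (mem_span_singleton'.2 ⟨c, rfl⟩))
    have hsup : K ⊔ span {x ^ (j + 1)} ⊔ span {x ^ j} = K ⊔ span {x ^ j} := by
      rw [sup_assoc, sup_eq_right.2 (span_singleton_le_span_singleton.2 (pow_dvd_pow x j.le_succ))]
    grw [length_quotient_le_add_of_mul_mem hxG, hsup, ih]
    rw [Nat.cast_succ, add_one_mul, add_comm]

theorem Ideal.length_quotient_sup_pow_le {K J : Ideal A} {z : A} (hz : z ∈ J) {C d : ℕ}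
    (h : ∀ q : ℕ, length A (A ⧸ (K ⊔ span {z} ⊔ J ^ q)) * q ≤ C * q ^ d) (p : ℕ) :
    length A (A ⧸ (K ⊔ J ^ p)) ≤ C * p ^ d :=
  calc length A (A ⧸ (K ⊔ J ^ p)) = length A (A ⧸ (K ⊔ J ^ p ⊔ span {z ^ p})) := by
        rw [sup_eq_left.2 (le_sup_of_le_right ((span_singleton_le_iff_mem _).2 (pow_mem_pow hz p)))]
    _ ≤ p * length A (A ⧸ (K ⊔ J ^ p ⊔ span {z})) := length_quotient_sup_span_pow_le _ _ _
    _ = length A (A ⧸ (K ⊔ span {z} ⊔ J ^ p)) * p := by rw [sup_right_comm, mul_comm]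
    _ ≤ C * p ^ d := h p

end Length

section Dimension

variable {A : Type*} [CommRing A] {P : Ideal A} [P.IsPrime] {z : A}

theorem ringKrullDim_quotient_sup_span_singleton_add_one_le (hz : z ∉ P) :
    ringKrullDim (A ⧸ (P ⊔ span {z})) + 1 ≤ ringKrullDim (A ⧸ P) := by
  rw [← ringKrullDim_eq_of_ringEquiv (DoubleQuot.quotQuotEquivQuotSup P (span {z})),
    map_span, Set.image_singleton]
  refine ringKrullDim_quotient_succ_le_of_nonZeroDivisor (mem_nonZeroDivisors_of_ne_zero ?_)
  simpa [Quotient.eq_zero_iff_mem] using hz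

theorem ringKrullDim_quotient_sup_span_singleton_le (hz : z ∉ P) {d : ℕ}
    (hd : ringKrullDim (A ⧸ P) ≤ (d + 1 : ℕ)) : ringKrullDim (A ⧸ (P ⊔ span {z})) ≤ d := by
  have h := (ringKrullDim_quotient_sup_span_singleton_add_one_le hz).trans hd
  induction h' : ringKrullDim (A ⧸ (P ⊔ span {z})) using WithBot.recBotCoe with
  | bot => exact bot_le
  | coe e =>
    rw [h'] at h
    norm_cast at h ⊢
    exact (ENat.add_le_add_iff_right ENat.one_ne_top).1 h

theorem Ideal.sup_span_singleton_eq_top (hz : z ∉ P) (hd : ringKrullDim (A ⧸ P) ≤ 0) :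
    P ⊔ span {z} = ⊤ := by
  by_contra hne
  have := Quotient.nontrivial_iff.mpr hne
  have h := (add_le_add_left ringKrullDim_nonneg_of_nontrivial 1).trans
    ((ringKrullDim_quotient_sup_span_singleton_add_one_le hz).trans hd)
  exact absurd h (by norm_num)

end Dimension

section Growth

variable {A : Type*} [CommRing A] [IsNoetherianRing A]

open TensorProduct in
/-- Tensoring with `A ⧸ J ^ p` is right exact, so the bound passes along a prime filtration of
`A`. -/
theorem Ideal.exists_length_quotient_pow_le_of_forall_isPrime {J : Ideal A} {d : ℕ}
    (h : ∀ P : Ideal A, P.IsPrime → ∃ C : ℕ, ∀ p : ℕ, length A (A ⧸ (P ⊔ J ^ p)) ≤ C * p ^ d) :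
    ∃ C : ℕ, ∀ p : ℕ, length A (A ⧸ J ^ p) ≤ C * p ^ d := by
  suffices ∃ C : ℕ, ∀ p : ℕ, length A (A ⊗[A] (A ⧸ J ^ p)) ≤ C * p ^ d by
    simpa only [(TensorProduct.lid A _).length_eq] using this
  refine IsNoetherianRing.induction_on_isQuotientEquivQuotientPrime A (Module.Finite.self A)
    (motive := fun N _ _ _ ↦ ∃ C : ℕ, ∀ p : ℕ, length A (N ⊗[A] (A ⧸ J ^ p)) ≤ C * p ^ d)
    (fun N _ _ _ _ ↦ ⟨0, fun p ↦ by simp [length_eq_zero]⟩) (fun N _ _ _ P e ↦ ?_)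
    (fun N₁ _ _ _ N₂ _ _ _ N₃ _ _ _ f g _ hg H h₁ h₃ ↦ ?_)
  · obtain ⟨C, hC⟩ := h P.1 P.2
    refine ⟨C, fun p ↦ ?_⟩
    rw [(e.rTensor _).length_eq, length_quotient_tensor_quotient_eq]
    exact hC p
  · obtain ⟨C₁, hC₁⟩ := h₁
    obtain ⟨C₃, hC₃⟩ := h₃
    refine ⟨C₁ + C₃, fun p ↦ ?_⟩
    grw [length_le_add_of_exact (LinearMap.rTensor_surjective _ hg) (rTensor_exact _ H hg),
      hC₁ p, hC₃ p, Nat.cast_add, add_mul]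

theorem Ideal.exists_length_quotient_pow_le_of_hypersurface {J : Ideal A}
    (hJ : length A (A ⧸ J) ≠ ⊤) {d : ℕ}
    (h : ∀ P : Ideal A, P.IsPrime → ∀ z ∈ J, z ∉ P →
      ∃ C : ℕ, ∀ q : ℕ, length A (A ⧸ (P ⊔ span {z} ⊔ J ^ q)) * q ≤ C * q ^ d) :
    ∃ C : ℕ, ∀ p : ℕ, length A (A ⧸ J ^ p) ≤ C * p ^ d := by
  refine exists_length_quotient_pow_le_of_forall_isPrime fun P hP ↦ ?_
  by_cases hJP : J ≤ P
  · refine ⟨(length A (A ⧸ J)).toNat, fun p ↦ ?_⟩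
    rcases p.eq_zero_or_pos with rfl | hp
    · simp
    calc length A (A ⧸ (P ⊔ J ^ p)) ≤ length A (A ⧸ J) :=
          length_quotient_antitone (hJP.trans le_sup_left)
      _ = (length A (A ⧸ J)).toNat := (ENat.natCast_toNat hJ).symm
      _ ≤ (length A (A ⧸ J)).toNat * (p : ℕ∞) ^ d :=
          le_mul_of_one_le_right' (one_le_pow₀ (by exact_mod_cast hp))
  · obtain ⟨z, hzJ, hzP⟩ := SetLike.not_le_iff_exists.1 hJP
    obtain ⟨C, hC⟩ := h P hP z hzJ hzP
    exact ⟨C, length_quotient_sup_pow_le hzJ hC⟩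

/-- The factor `q` on the left makes the statement uniform in `d`: for `d = 0` the ideal
`P + (z)` is the unit ideal. -/
theorem Ideal.exists_length_quotient_sup_span_sup_pow_mul_le (d : ℕ) (hd : ringKrullDim A ≤ d)
    {P : Ideal A} [P.IsPrime] {z : A} (hz : z ∉ P) {J : Ideal A} (hJ : length A (A ⧸ J) ≠ ⊤) :
    ∃ C : ℕ, ∀ q : ℕ, length A (A ⧸ (P ⊔ span {z} ⊔ J ^ q)) * q ≤ C * q ^ d := by
  induction d generalizing A with
  | zero =>
    refine ⟨0, fun q ↦ ?_⟩
    rw [sup_span_singleton_eq_top hz (by simpa using (ringKrullDim_quotient_le P).trans hd),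
      top_sup_eq]
    simp
  | succ d ih =>
    have hdP := (ringKrullDim_quotient_le P).trans hd
    set B := A ⧸ (P ⊔ span {z})
    have hJB : length B (B ⧸ J.map (Quotient.mk _)) ≠ ⊤ := by
      rw [length_quotient_map_eq]
      exact ne_top_of_le_ne_top hJ (length_quotient_antitone le_sup_right)
    obtain ⟨C, hC⟩ := exists_length_quotient_pow_le_of_hypersurface hJB
      fun _ _ _ _ hz' ↦ ih (ringKrullDim_quotient_sup_span_singleton_le hz hdP) hz' hJB
    refine ⟨C, fun q ↦ ?_⟩
    have hq := hC q
    rw [← Ideal.map_pow, length_quotient_map_eq] at hq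
    grw [hq, pow_succ, mul_assoc]

end Growth

section Arcs

variable {R : Type u} [CommRing R]

theorem idealColength_eq_length (I : Ideal R) : idealColength R I = length R (R ⧸ I) := by
  rw [idealColength, ← coe_length]
  rfl

theorem arcOrd_mul (γ : Arc R) (f g : R) : arcOrd γ (f * g) = arcOrd γ f + arcOrd γ g := by
  simp [arcOrd, PowerSeries.order_mul]

theorem pow_le_of_forall_pos_arcOrd {C : Set (Arc R)} {b : ℕ → Ideal R}
    (hb : ∀ (p : ℕ) (f : R), f ∈ b p ↔ ∀ γ ∈ C, (p : ℕ∞) ≤ arcOrd γ f) {J : Ideal R}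
    (hJ : ∀ f ∈ J, ∀ γ ∈ C, 0 < arcOrd γ f) (p : ℕ) : J ^ p ≤ b p := by
  induction p with
  | zero => simp [one_eq_top, SetLike.le_def, hb]
  | succ p ih =>
    rw [pow_succ, mul_le]
    intro f hf g hg
    refine (hb _ _).2 fun γ hγ ↦ ?_
    rw [arcOrd_mul, Nat.cast_succ]
    exact add_le_add ((hb p f).1 (ih hf) γ hγ) (Order.one_le_iff_pos.2 (hJ g hg γ hγ))

theorem volSeq_eq_zero_of_mul_le {n : ℕ} {a : ℕ → Ideal R} {C : ℕ}
    (h : ∀ p : ℕ, idealColength R (a p) * p ≤ C * p ^ n) : volSeq R n a = 0 := by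
  set K : ℝ≥0∞ := C * n.factorial
  have hbound : ∀ p : ℕ, 0 < p →
      ENat.toENNReal (idealColength R (a p)) * n.factorial / (p : ℝ≥0∞) ^ n ≤ K / p := by
    intro p hp
    have hp0 : (p : ℝ≥0∞) ≠ 0 := by exact_mod_cast hp.ne'
    have hl : ENat.toENNReal (idealColength R (a p)) * p ≤ C * (p : ℝ≥0∞) ^ n := by
      exact_mod_cast ENat.toENNReal_le.2 (h p)
    calc ENat.toENNReal (idealColength R (a p)) * n.factorial / (p : ℝ≥0∞) ^ n
        = ENat.toENNReal (idealColength R (a p)) * p * n.factorial / ((p : ℝ≥0∞) ^ n * p) := by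
          rw [mul_right_comm, ENNReal.mul_div_mul_right _ _ hp0 (natCast_ne_top p)]
      _ ≤ C * (p : ℝ≥0∞) ^ n * n.factorial / ((p : ℝ≥0∞) ^ n * p) := by gcongr
      _ = K / p := by
          rw [mul_right_comm, mul_comm ((p : ℝ≥0∞) ^ n),
            ENNReal.mul_div_mul_right _ _ (pow_ne_zero _ hp0) (pow_ne_top (natCast_ne_top p))]
  have hK : Filter.Tendsto (fun p : ℕ ↦ K / p) Filter.atTop (nhds 0) := by
    simpa [div_eq_mul_inv] using
      ENNReal.Tendsto.const_mul ENNReal.tendsto_inv_nat_nhds_zero (Or.inr (by finiteness))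
  refine le_antisymm ?_ bot_le
  calc volSeq R n a ≤ Filter.atTop.limsup fun p : ℕ ↦ K / p :=
        Filter.limsup_le_limsup (Filter.eventually_atTop.2 ⟨1, hbound⟩)
    _ = 0 := hK.limsup_eq

end Arcs

theorem stmt_17_general {k : Type u} [Field k]
    (R : Type u) [CommRing R] [IsDomain R] [Algebra k R]
    (hfg : Algebra.FiniteType k R) (n : ℕ) (hdim : ringKrullDim R = n)
    (C : Set (Arc R))
    (hfinpts : ∃ s : Finset (Ideal R), (∀ m ∈ s, m.IsMaximal) ∧
      ∀ γ ∈ C, ∃ m ∈ s, ∀ f : R, 0 < arcOrd γ f ↔ f ∈ m)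
    (IZ : Ideal R) (hIZ : IZ ≠ ⊥)
    (hthin : ∀ γ ∈ C, ∀ f ∈ IZ, arcOrd γ f = ⊤)
    (b : ℕ → Ideal R)
    (hb : ∀ (p : ℕ) (f : R), f ∈ b p ↔ ∀ γ ∈ C, (p : ℕ∞) ≤ arcOrd γ f) :
    volSeq R n b = 0 := by
  have := Algebra.FiniteType.isNoetherianRing k R
  obtain ⟨s, hs_max, hs_arcs⟩ := hfinpts
  set J := s.inf id
  obtain ⟨z, hzIZ, hz⟩ := Submodule.exists_mem_ne_zero_of_ne_bot hIZ
  have hJ : length R (R ⧸ J) ≠ ⊤ :=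
    ne_top_of_le_ne_top (ENat.natCast_ne_top _) (length_quotient_finset_inf_le hs_max)
  obtain ⟨c, hc⟩ := exists_length_quotient_sup_span_sup_pow_mul_le n hdim.le
    (P := ⊥) (show z ∉ (⊥ : Ideal R) from hz) hJ
  have hJ_arcs : ∀ f ∈ J, ∀ γ ∈ C, 0 < arcOrd γ f := fun f hf γ hγ ↦ by
    obtain ⟨m, hm, hγm⟩ := hs_arcs γ hγ
    exact (hγm f).2 (Finset.inf_le (f := id) hm hf)
  have hz_b : ∀ p, z ∈ b p := fun p ↦ (hb p z).2 fun γ hγ ↦ (hthin γ hγ z hzIZ).symm ▸ le_top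
  have hle : ∀ p, ⊥ ⊔ span {z} ⊔ J ^ p ≤ b p := fun p ↦
    sup_le (sup_le bot_le ((span_singleton_le_iff_mem _).2 (hz_b p)))
      (pow_le_of_forall_pos_arcOrd hb hJ_arcs p)
  refine volSeq_eq_zero_of_mul_le (C := c) fun p ↦ ?_
  rw [idealColength_eq_length]
  exact (mul_le_mul_left (length_quotient_antitone (hle p)) _).trans (hc p)

/-- Let `C ⊆ X_∞` be a set of arcs on an `n`-dimensional affine variety `X = Spec R`
whose image in `X` is a finite set of closed points.  If `C` is thin, i.e. contained in
`Z_∞` for a proper closed subscheme `Z ⊊ X` (cut out by a nonzero ideal `I_Z`), then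
`vol(C) = 0`. -/
theorem stmt_17 {k : Type u} [Field k] [IsAlgClosed k] [CharZero k]
    (R : Type u) [CommRing R] [IsDomain R] [Algebra k R]
    (hfg : Algebra.FiniteType k R) (n : ℕ) (hdim : ringKrullDim R = n)
    (C : Set (Arc R))
    (hfinpts : ∃ s : Finset (Ideal R), (∀ m ∈ s, m.IsMaximal) ∧
      ∀ γ ∈ C, ∃ m ∈ s, ∀ f : R, 0 < arcOrd γ f ↔ f ∈ m)
    (IZ : Ideal R) (hIZ : IZ ≠ ⊥)
    (hthin : ∀ γ ∈ C, ∀ f ∈ IZ, arcOrd γ f = ⊤)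
    (b : ℕ → Ideal R)
    (hb : ∀ (p : ℕ) (f : R), f ∈ b p ↔ ∀ γ ∈ C, (p : ℕ∞) ≤ arcOrd γ f) :
    volSeq R n b = 0 :=
  stmt_17_general R hfg n hdim C hfinpts IZ hIZ hthin b hb
end
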